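/- arXiv:2406.16734 — 7 statements merged into one kernel-verified Lean document; each statement's English description precedes it below -/
import Mathlib

section
/- Let μ > 1 and t_j, p_j, t_k, p_k ≥ 0 with t_j + p_j ≤ t_k + p_k and min(t_j,p_j) > max(t_j,p_j)/μ (job j not imbalanced). Then in each of the four cases (2) t_j < t_k < p_j and D = t_j+p_j+t_k; (3) t_j < t_k < p_j, p_k < p_j and D = t_j+t_k+p_k; (4) t_k < t_j < p_k and D = t_j+p_j+t_k; (6) t_k < t_j, p_k < t_j and D = t_k+p_k; we have D ≤ ((2μ+1)/(μ+1))·(t_j + p_j). -/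
/-! Balance of `j` gives `max tj pj ≤ μ / (μ + 1) · σ` with `σ = tj + pj`, and in each of the four
cases the delay exceeds `σ` by at most `max tj pj`; since `(2μ + 1) / (μ + 1) = 1 + μ / (μ + 1)`,
this is the claimed bound. -/

theorem max_le_div_add_one_mul_add_of_max_div_lt_min {μ a b : ℝ} (hμ : 0 < μ)
    (h : max a b / μ < min a b) : max a b ≤ μ / (μ + 1) * (a + b) := by
  rw [div_lt_iff₀ hμ] at h
  rw [div_mul_eq_mul_div, le_div_iff₀ (by linarith), ← min_add_max a b]
  linarith

theorem le_two_mul_add_one_div_add_one_mul {μ σ M D : ℝ} (hμ : μ + 1 ≠ 0)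
    (hM : M ≤ μ / (μ + 1) * σ) (hD : D ≤ σ + M) : D ≤ (2 * μ + 1) / (μ + 1) * σ := by
  have hratio : (2 * μ + 1) / (μ + 1) = 1 + μ / (μ + 1) := by
    field_simp
    ring
  rw [hratio]
  linarith

theorem not_imbalanced_delay_ratio_general
    (μ : ℝ) (hμ : 1 < μ)
    (tj pj tk pk : ℝ) (hpj : 0 ≤ pj)
    (hbal : min tj pj > max tj pj / μ) :
    (tj < tk → tk < pj → tj + pj + tk ≤ (2 * μ + 1) / (μ + 1) * (tj + pj)) ∧
    (tj < tk → tk < pj → pk < pj → tj + tk + pk ≤ (2 * μ + 1) / (μ + 1) * (tj + pj)) ∧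
    (tk < tj → tj < pk → tj + pj + tk ≤ (2 * μ + 1) / (μ + 1) * (tj + pj)) ∧
    (tk < tj → pk < tj → tk + pk ≤ (2 * μ + 1) / (μ + 1) * (tj + pj)) := by
  have hmax := max_le_div_add_one_mul_add_of_max_div_lt_min (by linarith) hbal
  have bound : ∀ D, D ≤ tj + pj + max tj pj → D ≤ (2 * μ + 1) / (μ + 1) * (tj + pj) :=
    fun D hD => le_two_mul_add_one_div_add_one_mul (by linarith) hmax hD
  have htj_le := le_max_left tj pj
  have hpj_le := le_max_right tj pj
  exact ⟨fun _ _ => bound _ (by linarith), fun _ _ _ => bound _ (by linarith),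
    fun _ _ => bound _ (by linarith), fun _ _ => bound _ (by linarith)⟩

theorem not_imbalanced_delay_ratio
    (μ : ℝ) (hμ : 1 < μ)
    (tj pj tk pk : ℝ) (htj : 0 ≤ tj) (hpj : 0 ≤ pj) (htk : 0 ≤ tk) (hpk : 0 ≤ pk)
    (hσ : tj + pj ≤ tk + pk)
    (hbal : min tj pj > max tj pj / μ) :
    (tj < tk → tk < pj → tj + pj + tk ≤ (2 * μ + 1) / (μ + 1) * (tj + pj)) ∧
    (tj < tk → tk < pj → pk < pj → tj + tk + pk ≤ (2 * μ + 1) / (μ + 1) * (tj + pj)) ∧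
    (tk < tj → tj < pk → tj + pj + tk ≤ (2 * μ + 1) / (μ + 1) * (tj + pj)) ∧
    (tk < tj → pk < tj → tk + pk ≤ (2 * μ + 1) / (μ + 1) * (tj + pj)) :=
  not_imbalanced_delay_ratio_general μ hμ tj pj tk pk hpj hbal
end

section
/- Let 0 < ν < 1 and t_j, p_j, t_k, p_k ≥ 0 with t_j ≤ t_k. Suppose there exists m ≥ 0 with m ≥ t_j ≥ ν·m and m ≥ t_k ≥ ν·m, and p_j ≥ ν·t_j, p_k ≥ ν·t_k. Then: (a) if t_j < t_k, p_j < p_k (Leaf 2), then t_j + p_j + t_k ≤ (1 + 1/(ν+ν²))·(t_j+p_j); (b) if t_j < t_k, p_k < p_j, t_k < p_j (Leaf 3), then t_j + t_k + p_k ≤ (1 + 1/(ν+ν²))·min(t_j+p_j, t_k+p_k); (c) if t_j < t_k, p_j < t_k (Leaf 1) and t_k+p_k ≤ t_j+p_j, then t_j + p_j ≤ (2/(1+ν))·(t_k+p_k). Consequently the green-arc delay ratio is at most 1 + 1/(ν+ν²). -/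
/-! Both `t_j` and `t_k` lie in `[ν m, m]`, so each is at least `ν` times the other; together with
`p ≥ ν t` this gives `(ν + ν²) t_k ≤ t_j + p_j` and `(ν + ν²) t_j ≤ t_k + p_k`, which is exactly
what the bound `1 + 1/(ν + ν²)` absorbs in leaves 2 and 3. Leaf 1 only needs
`t_j + p_j ≤ 2 t_k ≤ 2/(1 + ν) · (t_k + p_k)`. -/

lemma add_sq_mul_le_add {ν a b p : ℝ} (hν : 0 ≤ ν) (hba : ν * b ≤ a) (hap : ν * a ≤ p) :
    (ν + ν ^ 2) * b ≤ a + p := by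
  nlinarith [mul_le_mul_of_nonneg_left hba hν]

lemma add_le_one_add_one_div_mul {c x y : ℝ} (hc : 0 < c) (hyx : c * y ≤ x) :
    x + y ≤ (1 + 1 / c) * x := by
  have : y ≤ x / c := by rw [le_div_iff₀ hc]; linarith
  calc x + y ≤ x + x / c := by linarith
    _ = (1 + 1 / c) * x := by ring

lemma add_le_two_div_one_add_mul {ν a p t q : ℝ} (hν : 0 < 1 + ν) (hat : a ≤ t) (hpt : p ≤ t)
    (htq : ν * t ≤ q) : a + p ≤ 2 / (1 + ν) * (t + q) := by
  rw [div_mul_eq_mul_div, le_div_iff₀ hν]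
  nlinarith

theorem green_arc_ratio_general
    (ν : ℝ) (hν0 : 0 < ν)
    (tj pj tk pk m : ℝ)
    (hmj1 : m ≥ tj) (hmj2 : tj ≥ ν * m)
    (hmk1 : m ≥ tk) (hmk2 : tk ≥ ν * m)
    (hpjν : pj ≥ ν * tj) (hpkν : pk ≥ ν * tk) :
    (tj < tk → pj < pk →
      tj + pj + tk ≤ (1 + 1 / (ν + ν ^ 2)) * (tj + pj)) ∧
    (tj < tk → pk < pj → tk < pj →
      tj + tk + pk ≤ (1 + 1 / (ν + ν ^ 2)) * min (tj + pj) (tk + pk)) ∧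
    (tj < tk → pj < tk → tk + pk ≤ tj + pj →
      tj + pj ≤ 2 / (1 + ν) * (tk + pk)) := by
  have hc : 0 < ν + ν ^ 2 := by positivity
  have hkj : ν * tk ≤ tj := (mul_le_mul_of_nonneg_left hmk1 hν0.le).trans hmj2
  have hjk : ν * tj ≤ tk := (mul_le_mul_of_nonneg_left hmj1 hν0.le).trans hmk2
  have leaf_j := add_le_one_add_one_div_mul hc (add_sq_mul_le_add hν0.le hkj hpjν)
  have leaf_k := add_le_one_add_one_div_mul hc (add_sq_mul_le_add hν0.le hjk hpkν)
  refine ⟨fun _ _ => leaf_j, fun _ hpkj _ => ?_, fun hlt hpj _ => ?_⟩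
  · rw [mul_min_of_nonneg _ _ (by positivity)]
    exact le_min (by linarith) (by linarith)
  · exact add_le_two_div_one_add_mul (by linarith) hlt.le hpj.le hpkν

theorem green_arc_ratio
    (ν : ℝ) (hν0 : 0 < ν) (hν1 : ν < 1)
    (tj pj tk pk m : ℝ)
    (htj : 0 ≤ tj) (hpj : 0 ≤ pj) (htk : 0 ≤ tk) (hpk : 0 ≤ pk)
    (hjk : tj ≤ tk) (hm : 0 ≤ m)
    (hmj1 : m ≥ tj) (hmj2 : tj ≥ ν * m)
    (hmk1 : m ≥ tk) (hmk2 : tk ≥ ν * m)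
    (hpjν : pj ≥ ν * tj) (hpkν : pk ≥ ν * tk) :
    (tj < tk → pj < pk →
      tj + pj + tk ≤ (1 + 1 / (ν + ν ^ 2)) * (tj + pj)) ∧
    (tj < tk → pk < pj → tk < pj →
      tj + tk + pk ≤ (1 + 1 / (ν + ν ^ 2)) * min (tj + pj) (tk + pk)) ∧
    (tj < tk → pj < tk → tk + pk ≤ tj + pj →
      tj + pj ≤ 2 / (1 + ν) * (tk + pk)) :=
  green_arc_ratio_general ν hν0 tj pj tk pk m hmj1 hmj2 hmk1 hmk2 hpjν hpkν
end

section
/- Let μ > 1 and 0 < ν < 1 with μν > 1. Suppose t_i, p_i, t_j, p_j ≥ 0 satisfy p_i ≥ μ·t_i, p_j ≥ μ·t_j, min(p_i,p_j) ≥ ν·max(p_i,p_j), min(t_i,t_j) ≥ ν·max(t_i,t_j), and WLOG t_i < t_j. Then (t_i + t_j + min(p_i,p_j)) / (min(t_i,t_j) + min(p_i,p_j)) ≤ 1 + 1/(ν(μ+1)). -/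
/-! Since `t_i ≥ ν t_j` and `min(p_i, p_j) ≥ ν p_j ≥ νμ t_j`, the denominator is at least
`ν(μ+1) t_j`, and `t_j` is exactly the excess of the numerator over the denominator. -/

theorem add_div_self_le_one_add_one_div {x y c : ℝ} (hc : 0 < c) (hy : 0 ≤ y) (h : c * y ≤ x) :
    (x + y) / x ≤ 1 + 1 / c := by
  obtain hx | hx := (le_trans (by positivity) h : (0 : ℝ) ≤ x).eq_or_lt
  · subst hx
    simp only [div_zero]
    positivity
  · rw [add_div, div_self hx.ne', add_le_add_iff_left, div_le_div_iff₀ hx hc]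
    linarith

theorem special_arc_ratio_general
    (μ ν : ℝ) (hμ : 1 < μ) (hν0 : 0 < ν)
    (ti pi tj pj : ℝ)
    (htj : 0 ≤ tj)
    (hj : pj ≥ μ * tj)
    (hp : min pi pj ≥ ν * max pi pj)
    (ht : min ti tj ≥ ν * max ti tj)
    (hij : ti < tj) :
    (ti + tj + min pi pj) / (min ti tj + min pi pj) ≤ 1 + 1 / (ν * (μ + 1)) := by
  have hmin_t : min ti tj = ti := min_eq_left hij.le
  have hti : ν * tj ≤ ti := by rwa [hmin_t, max_eq_right hij.le] at ht
  have hmin_p : ν * μ * tj ≤ min pi pj :=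
    calc ν * μ * tj = ν * (μ * tj) := mul_assoc ..
      _ ≤ ν * max pi pj := by gcongr; exact hj.le.trans (le_max_right pi pj)
      _ ≤ min pi pj := hp
  rw [hmin_t, add_right_comm]
  exact add_div_self_le_one_add_one_div (mul_pos hν0 (by linarith)) htj (by linarith)

theorem special_arc_ratio
    (μ ν : ℝ) (hμ : 1 < μ) (hν0 : 0 < ν) (hν1 : ν < 1) (hμν : 1 < μ * ν)
    (ti pi tj pj : ℝ)
    (hti : 0 ≤ ti) (hpi : 0 ≤ pi) (htj : 0 ≤ tj) (hpj : 0 ≤ pj)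
    (hi : pi ≥ μ * ti) (hj : pj ≥ μ * tj)
    (hp : min pi pj ≥ ν * max pi pj)
    (ht : min ti tj ≥ ν * max ti tj)
    (hij : ti < tj) :
    (ti + tj + min pi pj) / (min ti tj + min pi pj) ≤ 1 + 1 / (ν * (μ + 1)) :=
  special_arc_ratio_general μ ν hμ hν0 ti pi tj pj htj hj hp ht hij
end

section
/- Let μ > 1, 0 < ν < 1. Let t > 0 and D₁, D₂, G ≥ 0 with D₁, D₂ ≤ t·(1/ν + 1/(μν)) and G ≥ (ν+ν²)·t, and let ρ_G = 1 + 1/(ν+ν²) < 2. Then (2D₁ + 2D₂ + ρ_G·G)/(D₁ + D₂ + G) ≤ (4/ν + 4/(μν) + ν + ν² + 1)/(2/ν + 2/(μν) + ν + ν²). -/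
/-!
Write `a = 1/ν + 1/(μν)` and `b = ν + ν²`. The left side is a weighted average of the red
ratio `2` and the green ratio `1 + 1/b ≤ 2`, with weights `D₁ + D₂ ≤ 2at` and `G ≥ bt`.
Shifting weight towards the smaller value only lowers such an average, so it is at most the
average with weights exactly `2a` and `b`, which is the right side.
-/

theorem weighted_average_le_of_cross_le {K : Type*} [Field K] [LinearOrder K]
    [IsStrictOrderedRing K] {r ρ D G d g : K} (hρr : ρ ≤ r) (hDG : 0 < D + G) (hdg : 0 < d + g)
    (hcross : D * g ≤ d * G) :
    (r * D + ρ * G) / (D + G) ≤ (r * d + ρ * g) / (d + g) := by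
  rw [div_le_div_iff₀ hDG hdg]
  nlinarith [mul_nonneg (sub_nonneg.2 hρr) (sub_nonneg.2 hcross)]

theorem two_red_one_green_group_ratio_general
    (μ ν : ℝ) (hμ : 1 < μ) (hν0 : 0 < ν)
    (t D₁ D₂ G : ℝ) (ht : 0 < t)
    (hD₁0 : 0 ≤ D₁) (hD₂0 : 0 ≤ D₂)
    (hD₁ : D₁ ≤ t * (1 / ν + 1 / (μ * ν)))
    (hD₂ : D₂ ≤ t * (1 / ν + 1 / (μ * ν)))
    (hG : G ≥ (ν + ν ^ 2) * t)
    (hρG : 1 + 1 / (ν + ν ^ 2) < 2) :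
    (2 * D₁ + 2 * D₂ + (1 + 1 / (ν + ν ^ 2)) * G) / (D₁ + D₂ + G)
      ≤ (4 / ν + 4 / (μ * ν) + ν + ν ^ 2 + 1) / (2 / ν + 2 / (μ * ν) + ν + ν ^ 2) := by
  have hμ0 : 0 < μ := zero_lt_one.trans hμ
  set a := 1 / ν + 1 / (μ * ν) with ha_def
  set b := ν + ν ^ 2 with hb_def
  have ha : 0 < a := by positivity
  have hb : 0 < b := by positivity
  have hGpos : 0 < G := (by positivity : 0 < b * t).trans_le hG
  have hcross : (D₁ + D₂) * b ≤ 2 * a * G :=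
    calc (D₁ + D₂) * b ≤ (2 * a * t) * b := by gcongr; linarith
      _ = 2 * a * (b * t) := by ring
      _ ≤ 2 * a * G := by gcongr
  calc (2 * D₁ + 2 * D₂ + (1 + 1 / b) * G) / (D₁ + D₂ + G)
      = (2 * (D₁ + D₂) + (1 + 1 / b) * G) / (D₁ + D₂ + G) := by ring
    _ ≤ (2 * (2 * a) + (1 + 1 / b) * b) / (2 * a + b) :=
      weighted_average_le_of_cross_le hρG.le (by positivity) (by positivity) hcross
    _ = (4 / ν + 4 / (μ * ν) + ν + ν ^ 2 + 1) / (2 / ν + 2 / (μ * ν) + ν + ν ^ 2) := by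
      rw [ha_def, hb_def]
      field_simp
      ring

theorem two_red_one_green_group_ratio
    (μ ν : ℝ) (hμ : 1 < μ) (hν0 : 0 < ν) (hν1 : ν < 1)
    (t D₁ D₂ G : ℝ) (ht : 0 < t)
    (hD₁0 : 0 ≤ D₁) (hD₂0 : 0 ≤ D₂) (hG0 : 0 ≤ G)
    (hD₁ : D₁ ≤ t * (1 / ν + 1 / (μ * ν)))
    (hD₂ : D₂ ≤ t * (1 / ν + 1 / (μ * ν)))
    (hG : G ≥ (ν + ν ^ 2) * t)
    (hρG : 1 + 1 / (ν + ν ^ 2) < 2) :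
    (2 * D₁ + 2 * D₂ + (1 + 1 / (ν + ν ^ 2)) * G) / (D₁ + D₂ + G)
      ≤ (4 / ν + 4 / (μ * ν) + ν + ν ^ 2 + 1) / (2 / ν + 2 / (μ * ν) + ν + ν ^ 2) :=
  two_red_one_green_group_ratio_general μ ν hμ hν0 t D₁ D₂ G ht hD₁0 hD₂0 hD₁ hD₂ hG hρG
end

section
/- Let μ > 1, 0 < ν < 1. Let t > 0 and D₁, D₂, B ≥ 0 with D₁, D₂ ≤ t·(1/ν + 1/(μν)) and B ≥ t, and ρ_B = 1 + 1/(μν) < 2. Then (2D₁ + 2D₂ + ρ_B·B)/(D₁ + D₂ + B) ≤ (4 + 5/μ + ν)/(2 + 2/μ + ν). -/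
/-!
The ratio is a weighted average of the slopes `2` (red) and `ρ_B < 2` (blue), with the red weight
`D₁ + D₂` and the blue weight `B`. It therefore grows when the red weight grows and the blue weight
shrinks, so it is largest at `D₁ = D₂ = t (1/ν + 1/(μν))` and `B = t`, where it equals the bound exactly.
-/

lemma weighted_avg_le_weighted_avg {a b S S' B B' : ℝ} (hba : b ≤ a) (hS : 0 ≤ S) (hSS' : S ≤ S')
    (hB' : 0 < B') (hBB' : B' ≤ B) :
    (a * S + b * B) / (S + B) ≤ (a * S' + b * B') / (S' + B') := by
  rw [div_le_div_iff₀ (by linarith) (by linarith)]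
  have hcross : S * B' ≤ S' * B := mul_le_mul hSS' hBB' hB'.le (hS.trans hSS')
  nlinarith [mul_le_mul_of_nonneg_left hcross (sub_nonneg.mpr hba)]

lemma extremal_group_ratio_eq {μ ν t : ℝ} (hμ : 0 < μ) (hν : 0 < ν) (ht : 0 < t) :
    (2 * (2 * (t * (1 / ν + 1 / (μ * ν)))) + (1 + 1 / (μ * ν)) * t) /
        (2 * (t * (1 / ν + 1 / (μ * ν))) + t)
      = (4 + 5 / μ + ν) / (2 + 2 / μ + ν) := by
  rw [div_eq_div_iff (by positivity) (by positivity)]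
  field_simp
  ring

theorem two_red_one_blue_group_ratio_general
    (μ ν : ℝ) (hμ : 1 < μ) (hν0 : 0 < ν)
    (t D₁ D₂ B : ℝ) (ht : 0 < t)
    (hD₁0 : 0 ≤ D₁) (hD₂0 : 0 ≤ D₂)
    (hD₁ : D₁ ≤ t * (1 / ν + 1 / (μ * ν)))
    (hD₂ : D₂ ≤ t * (1 / ν + 1 / (μ * ν)))
    (hB : B ≥ t)
    (hρB : 1 + 1 / (μ * ν) < 2) :
    (2 * D₁ + 2 * D₂ + (1 + 1 / (μ * ν)) * B) / (D₁ + D₂ + B)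
      ≤ (4 + 5 / μ + ν) / (2 + 2 / μ + ν) := by
  calc (2 * D₁ + 2 * D₂ + (1 + 1 / (μ * ν)) * B) / (D₁ + D₂ + B)
      = (2 * (D₁ + D₂) + (1 + 1 / (μ * ν)) * B) / ((D₁ + D₂) + B) := by ring_nf
    _ ≤ (2 * (2 * (t * (1 / ν + 1 / (μ * ν)))) + (1 + 1 / (μ * ν)) * t) /
          (2 * (t * (1 / ν + 1 / (μ * ν))) + t) :=
        weighted_avg_le_weighted_avg hρB.le (by positivity) (by linarith) ht hB
    _ = (4 + 5 / μ + ν) / (2 + 2 / μ + ν) := extremal_group_ratio_eq (by linarith) hν0 ht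

theorem two_red_one_blue_group_ratio
    (μ ν : ℝ) (hμ : 1 < μ) (hν0 : 0 < ν) (hν1 : ν < 1)
    (t D₁ D₂ B : ℝ) (ht : 0 < t)
    (hD₁0 : 0 ≤ D₁) (hD₂0 : 0 ≤ D₂) (hB0 : 0 ≤ B)
    (hD₁ : D₁ ≤ t * (1 / ν + 1 / (μ * ν)))
    (hD₂ : D₂ ≤ t * (1 / ν + 1 / (μ * ν)))
    (hB : B ≥ t)
    (hρB : 1 + 1 / (μ * ν) < 2) :
    (2 * D₁ + 2 * D₂ + (1 + 1 / (μ * ν)) * B) / (D₁ + D₂ + B)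
      ≤ (4 + 5 / μ + ν) / (2 + 2 / μ + ν) :=
  two_red_one_blue_group_ratio_general μ ν hμ hν0 t D₁ D₂ B ht hD₁0 hD₂0 hD₁ hD₂ hB hρB
end

section
/- For all n ≥ 1 and all 0 ≤ γ ≤ 1, the ratio ((1+2γ−γ²)/2·n² + (1+γ)/2·n) / ((γ²+1)/2·n² + (1+γ)/2·n) is strictly less than √2, and for γ as close as possible to √2−1 (a multiple of 1/n), the ratio tends to √2 as n → ∞. -/
/-!
Both objectives are quadratics in `n` with the same linear term `(1 + γ) / 2 · n`, so the ratio
is governed by the leading coefficients. The identity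
`√2 (γ² + 1) - (1 + 2γ - γ²) = (√2 + 1) (γ - (√2 - 1))²`
bounds the leading ratio by `√2`, with equality exactly at `γ = √2 - 1`; the positive linear term
makes the inequality strict for finite `n`, and vanishes relative to `n²` as `n → ∞`.
-/

open Filter Topology

-- `ALG` and `OPT` of the instance with `γ n` long and `(1 - γ) n` short jobs, at `x = n`.
noncomputable def algObjective (γ x : ℝ) : ℝ := (1 + 2 * γ - γ ^ 2) / 2 * x ^ 2 + (1 + γ) / 2 * x

noncomputable def optObjective (γ x : ℝ) : ℝ := (γ ^ 2 + 1) / 2 * x ^ 2 + (1 + γ) / 2 * x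

lemma one_add_two_mul_sub_sq_le_sqrt_two_mul (γ : ℝ) :
    1 + 2 * γ - γ ^ 2 ≤ √2 * (γ ^ 2 + 1) := by
  have hs : √2 ^ 2 = 2 := Real.sq_sqrt zero_le_two
  have key : √2 * (γ ^ 2 + 1) - (1 + 2 * γ - γ ^ 2) = (√2 + 1) * (γ - (√2 - 1)) ^ 2 := by
    linear_combination (2 * γ - √2 + 1) * hs
  rw [← sub_nonneg, key]
  positivity

lemma algObjective_div_optObjective_lt_sqrt_two {γ x : ℝ} (hγ : -1 < γ) (hx : 0 < x) :
    algObjective γ x / optObjective γ x < √2 := by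
  have hlin : 0 < (1 + γ) / 2 * x := mul_pos (by linarith) hx
  have hopt : 0 < optObjective γ x := by unfold optObjective; positivity
  rw [div_lt_iff₀ hopt]
  have hlead := mul_le_mul_of_nonneg_right (one_add_two_mul_sub_sq_le_sqrt_two_mul γ)
    (by positivity : 0 ≤ x ^ 2 / 2)
  unfold algObjective optObjective
  linarith [mul_lt_mul_of_pos_right Real.one_lt_sqrt_two hlin]

lemma algObjective_div_optObjective_eq {γ x : ℝ} (hx : x ≠ 0) :
    algObjective γ x / optObjective γ x =
      (1 + 2 * γ - γ ^ 2 + (1 + γ) * x⁻¹) / (γ ^ 2 + 1 + (1 + γ) * x⁻¹) := by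
  unfold algObjective optObjective
  field_simp

lemma tendsto_algObjective_div_optObjective {ι : Type*} {l : Filter ι} {γ : ι → ℝ} {γ₀ : ℝ}
    {x : ι → ℝ} (hγ : Tendsto γ l (𝓝 γ₀)) (hx : Tendsto x l atTop) :
    Tendsto (fun i => algObjective (γ i) (x i) / optObjective (γ i) (x i)) l
      (𝓝 ((1 + 2 * γ₀ - γ₀ ^ 2) / (γ₀ ^ 2 + 1))) := by
  have hinv : Tendsto (fun i => (x i)⁻¹) l (𝓝 0) := tendsto_inv_atTop_zero.comp hx
  have hlin : Tendsto (fun i => (1 + γ i) * (x i)⁻¹) l (𝓝 0) := by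
    simpa using (tendsto_const_nhds.add hγ).mul hinv
  have hnum : Tendsto (fun i => 1 + 2 * γ i - γ i ^ 2 + (1 + γ i) * (x i)⁻¹) l
      (𝓝 (1 + 2 * γ₀ - γ₀ ^ 2)) := by
    simpa using ((tendsto_const_nhds.add (hγ.const_mul 2)).sub (hγ.pow 2)).add hlin
  have hden : Tendsto (fun i => γ i ^ 2 + 1 + (1 + γ i) * (x i)⁻¹) l (𝓝 (γ₀ ^ 2 + 1)) := by
    simpa using ((hγ.pow 2).add tendsto_const_nhds).add hlin
  refine (hnum.div hden (by positivity)).congr' ?_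
  filter_upwards [hx.eventually_ne_atTop 0] with i hi
  exact (algObjective_div_optObjective_eq hi).symm

lemma one_add_two_mul_sub_sq_div_eq_sqrt_two :
    (1 + 2 * (√2 - 1) - (√2 - 1) ^ 2) / ((√2 - 1) ^ 2 + 1) = √2 := by
  have hs : √2 ^ 2 = 2 := Real.sq_sqrt zero_le_two
  have hden : (√2 - 1) ^ 2 + 1 ≠ 0 := by positivity
  rw [div_eq_iff hden]
  linear_combination (1 - √2) * hs

lemma tendsto_of_abs_sub_le_one_div {u : ℕ → ℝ} {a : ℝ}
    (hu : ∀ n : ℕ, 1 ≤ n → |u n - a| ≤ 1 / n) : Tendsto u atTop (𝓝 a) := by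
  rw [tendsto_iff_norm_sub_tendsto_zero]
  refine squeeze_zero_norm' ?_ tendsto_one_div_atTop_nhds_zero_nat
  filter_upwards [eventually_ge_atTop 1] with n hn
  simpa using hu n hn

theorem adversary_ratio_lt_sqrt_two_and_tends_to_sqrt_two :
    (∀ n : ℕ, 1 ≤ n → ∀ γ : ℝ, 0 ≤ γ → γ ≤ 1 →
      ((1 + 2 * γ - γ ^ 2) / 2 * (n : ℝ) ^ 2 + (1 + γ) / 2 * n) /
        ((γ ^ 2 + 1) / 2 * (n : ℝ) ^ 2 + (1 + γ) / 2 * n) < Real.sqrt 2) ∧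
    (∀ γseq : ℕ → ℝ,
      (∀ n : ℕ, 1 ≤ n → |γseq n - (Real.sqrt 2 - 1)| ≤ 1 / n) →
      Filter.Tendsto
        (fun n : ℕ =>
          ((1 + 2 * γseq n - (γseq n) ^ 2) / 2 * (n : ℝ) ^ 2 + (1 + γseq n) / 2 * n) /
            (((γseq n) ^ 2 + 1) / 2 * (n : ℝ) ^ 2 + (1 + γseq n) / 2 * n))
        Filter.atTop (nhds (Real.sqrt 2))) := by
  refine ⟨fun n hn γ hγ _ => ?_, fun γseq hγseq => ?_⟩
  · exact algObjective_div_optObjective_lt_sqrt_two (by linarith) (by exact_mod_cast hn)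
  · have h := tendsto_algObjective_div_optObjective (tendsto_of_abs_sub_le_one_div hγseq)
      tendsto_natCast_atTop_atTop
    rwa [one_add_two_mul_sub_sq_div_eq_sqrt_two] at h
end

section
/- Let 0 ≤ β ≤ 1 and define g(β) = (1/2)(√((β+4)/β) + 1). Then for γ = (β + 2 − √(β(β+4)))/2 ∈ [0,1], the ratio ((1−γ)/β + 1/2) / (γ²/2 + γ(1−γ) + (1+1/β)(1−γ)²/2) equals g(β); moreover g is decreasing on (0,1] and g(1) = (√5+1)/2. -/
/-!
With `s = √(β(β+4))` the chosen split point is `γ = (β + 2 - s)/2`, at which the algorithm's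
cost is `s/(2β)` and the optimum's is `(β + 4 - s)/4`; the relation `s² = β(β+4)` collapses their
ratio to `(s/β + 1)/2 = (√((β+4)/β) + 1)/2`. Monotonicity follows from `(b + 4)/b = 1 + 4/b`.
-/

open Set

namespace BetaSort

/-- Scaled cost `ALG` of the algorithm when a `γ`-fraction of the jobs is released at time `0`. -/
noncomputable def algCost (β γ : ℝ) : ℝ := (1 - γ) / β + 1 / 2

/-- Scaled optimal cost `OPT` on the same instance. -/
noncomputable def optCost (β γ : ℝ) : ℝ :=
  γ ^ 2 / 2 + γ * (1 - γ) + (1 + 1 / β) * (1 - γ) ^ 2 / 2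

lemma le_sqrt_mul_add_four {β : ℝ} (hβ : 0 ≤ β) : β ≤ √(β * (β + 4)) :=
  Real.le_sqrt_of_sq_le (by nlinarith)

lemma sqrt_mul_add_four_le {β : ℝ} (hβ : -2 ≤ β) : √(β * (β + 4)) ≤ β + 2 :=
  Real.sqrt_le_iff.mpr ⟨by linarith, by nlinarith⟩

lemma sqrt_add_four_div {β : ℝ} (hβ : 0 < β) : √((β + 4) / β) = √(β * (β + 4)) / β := by
  rw [← Real.sqrt_sq hβ.le, ← Real.sqrt_div (by positivity), Real.sqrt_sq hβ.le]
  congr 1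
  field_simp

lemma algCost_div_optCost_of_sq_eq {β s : ℝ} (hβ : β ≠ 0) (hs : s ^ 2 = β * (β + 4))
    (hden : s ≠ β + 4) :
    algCost β ((β + 2 - s) / 2) / optCost β ((β + 2 - s) / 2) = (s / β + 1) / 2 := by
  have hopt : optCost β ((β + 2 - s) / 2) = (β + 4 - s) / 4 := by
    unfold optCost
    field_simp
    linear_combination 4 * hs
  have halg : algCost β ((β + 2 - s) / 2) = s / (2 * β) := by
    unfold algCost
    field_simp
    ring
  have hden' : β + 4 - s ≠ 0 := sub_ne_zero.mpr (Ne.symm hden)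
  rw [hopt, halg, div_eq_iff (div_ne_zero hden' four_ne_zero)]
  field_simp
  linear_combination hs

lemma strictAntiOn_sqrt_add_four_div : StrictAntiOn (fun b : ℝ => √((b + 4) / b)) (Ioi 0) := by
  intro x hx y hy hxy
  have hx : 0 < x := hx
  have hy : 0 < y := hy
  refine Real.sqrt_lt_sqrt (by positivity) ?_
  rw [div_lt_div_iff₀ hy hx]
  nlinarith

end BetaSort

open BetaSort in
theorem beta_sort_lower_bound_small_beta_general
    (β : ℝ) (hβ0 : 0 < β) :
    let g : ℝ → ℝ := fun b => (1 / 2) * (Real.sqrt ((b + 4) / b) + 1)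
    let γ : ℝ := (β + 2 - Real.sqrt (β * (β + 4))) / 2
    (0 ≤ γ ∧ γ ≤ 1) ∧
    ((1 - γ) / β + 1 / 2) /
        (γ ^ 2 / 2 + γ * (1 - γ) + (1 + 1 / β) * (1 - γ) ^ 2 / 2) = g β ∧
    StrictAntiOn g (Set.Ioc (0 : ℝ) 1) ∧
    g 1 = (Real.sqrt 5 + 1) / 2 := by
  intro g γ
  have hlow := le_sqrt_mul_add_four hβ0.le
  have hupp := sqrt_mul_add_four_le (by linarith : -2 ≤ β)
  refine ⟨⟨by simp only [γ]; linarith, by simp only [γ]; linarith⟩, ?_, ?_, ?_⟩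
  · have hs : √(β * (β + 4)) ^ 2 = β * (β + 4) := Real.sq_sqrt (by positivity)
    calc algCost β γ / optCost β γ = (√(β * (β + 4)) / β + 1) / 2 :=
          algCost_div_optCost_of_sq_eq hβ0.ne' hs (by linarith)
      _ = g β := by simp only [g, sqrt_add_four_div hβ0]; ring
  · intro x hx y hy hxy
    have := strictAntiOn_sqrt_add_four_div hx.1 hy.1 hxy
    simp only [g]
    linarith
  · norm_num [g]
    ring

theorem beta_sort_lower_bound_small_beta
    (β : ℝ) (hβ0 : 0 < β) (hβ1 : β ≤ 1) :
    let g : ℝ → ℝ := fun b => (1 / 2) * (Real.sqrt ((b + 4) / b) + 1)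
    let γ : ℝ := (β + 2 - Real.sqrt (β * (β + 4))) / 2
    (0 ≤ γ ∧ γ ≤ 1) ∧
    ((1 - γ) / β + 1 / 2) /
        (γ ^ 2 / 2 + γ * (1 - γ) + (1 + 1 / β) * (1 - γ) ^ 2 / 2) = g β ∧
    StrictAntiOn g (Set.Ioc (0 : ℝ) 1) ∧
    g 1 = (Real.sqrt 5 + 1) / 2 :=
  beta_sort_lower_bound_small_beta_general β hβ0
end
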